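/- Let H be a bipartite graph, T ⊆ V(H) a vertex cover of H, and G = H_T the graph obtained by attaching a union of complete graphs at each vertex of T, where every attached graph K(x_{i_j}) is star complete (has a simplicial vertex of degree ≥ 2, i.e., contains a complete graph on at least 3 vertices). Then ν(G) = cochord(G), and both equal the number of attached cliques of size at least 3. -/

import Mathlib

open MvPolynomial

noncomputable section

namespace EdgeIdealReg

open scoped Classical

/-- The edge ideal of a simple graph, in the polynomial ring with variables the vertices. -/
def edgeIdeal (K : Type) [Field K] {V : Type} (G : SimpleGraph V) :
    Ideal (MvPolynomial V K) :=
  Ideal.span { p | ∃ u v : V, G.Adj u v ∧ p = X u * X v }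

/-- The edge ideal of the induced subgraph on a set `s` of vertices, viewed inside the
polynomial ring of the ambient graph (extra variables do not change the regularity). -/
def edgeIdealOn (K : Type) [Field K] {V : Type} (G : SimpleGraph V) (s : Set V) :
    Ideal (MvPolynomial V K) :=
  Ideal.span { p | ∃ u v : V, G.Adj u v ∧ u ∈ s ∧ v ∈ s ∧ p = X u * X v }

/-- The `r`-th symbolic power of an ideal: the intersection over all minimal primes `p` of `I`
of the contraction of `I^r` localized at `p`; concretely,
`f ∈ I^{(r)}` iff for every minimal prime `p` of `I` there is `s ∉ p` with `s * f ∈ I ^ r`. -/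
def symbolicPower {R : Type} [CommRing R] (I : Ideal R) (r : ℕ) : Ideal R where
  carrier := { f | ∀ p ∈ I.minimalPrimes, ∃ s, s ∉ p ∧ s * f ∈ I ^ r }
  zero_mem' := by
    intro p hp
    exact ⟨1, (Ideal.ne_top_iff_one p).mp hp.1.1.ne_top, by simp⟩
  add_mem' := by
    intro a b ha hb p hp
    obtain ⟨s, hs, hsa⟩ := ha p hp
    obtain ⟨t, ht, htb⟩ := hb p hp
    refine ⟨s * t, fun h => ?_, ?_⟩
    · rcases hp.1.1.mem_or_mem h with h' | h'
      · exact hs h'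
      · exact ht h'
    · have : s * t * (a + b) = t * (s * a) + s * (t * b) := by ring
      rw [this]
      exact Ideal.add_mem _ (Ideal.mul_mem_left _ _ hsa) (Ideal.mul_mem_left _ _ htb)
  smul_mem' := by
    intro c f hf p hp
    obtain ⟨s, hs, hsf⟩ := hf p hp
    refine ⟨s, hs, ?_⟩
    have : s * (c • f) = c * (s * f) := by
      simp only [smul_eq_mul]; ring
    rw [this]
    exact Ideal.mul_mem_left _ _ hsf

/-- Symbolic power with an integer exponent, with the convention `I^{(k)} = S` for `k ≤ 0`. -/
def symbolicPowerZ {R : Type} [CommRing R] (I : Ideal R) (k : ℤ) : Ideal R :=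
  if k ≤ 0 then ⊤ else symbolicPower I k.toNat

/-- A graded free resolution of `S/I` over the polynomial ring `S = K[x_v]`:
`⋯ → F_{i+1} → F_i → ⋯ → F_0 = S → S/I → 0`, where `F_i` is a graded free module with
basis elements of degrees `deg i k`, the differentials are given by matrices of homogeneous
polynomials of the appropriate degrees, the image of `F_1 → F_0 = S` is `I`, and the
complex is exact in positive homological degrees. -/
structure GradedFreeResolution {K : Type} [Field K] {σ : Type}
    (I : Ideal (MvPolynomial σ K)) where
  rank : ℕ → ℕ
  deg : (i : ℕ) → Fin (rank i) → ℕ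
  rank_zero : rank 0 = 1
  deg_zero : ∀ k, deg 0 k = 0
  mat : (i : ℕ) → Matrix (Fin (rank i)) (Fin (rank (i + 1))) (MvPolynomial σ K)
  homog : ∀ i k j, mat i k j = 0 ∨
    ∃ e, deg (i + 1) j = deg i k + e ∧ (mat i k j).IsHomogeneous e
  range_zero : ∀ f : MvPolynomial σ K,
    f ∈ I ↔ (fun _ => f) ∈ LinearMap.range (Matrix.mulVecLin (mat 0))
  isExact : ∀ i, LinearMap.ker (Matrix.mulVecLin (mat i)) =
    LinearMap.range (Matrix.mulVecLin (mat (i + 1)))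

/-- The Castelnuovo–Mumford regularity of the quotient `S/I` for a homogeneous ideal `I` of
the polynomial ring: the least `d` such that some graded free resolution of `S/I` has all its
`i`-th syzygies generated in degrees `≤ d + i` (the minimal free resolution realizes the
infimum).  By convention `reg (S/S) = ⊥ = -∞`. -/

def regQuot {K : Type} [Field K] {σ : Type} (I : Ideal (MvPolynomial σ K)) : WithBot ℤ :=
  if I = ⊤ then ⊥
  else ((sInf { d : ℤ | ∃ F : GradedFreeResolution I,
      ∀ i (k : Fin (F.rank i)), (F.deg i k : ℤ) ≤ d + i } : ℤ) : WithBot ℤ)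

/-- A set of edges of `G` that forms a matching: pairwise disjoint edges. -/
def IsMatchingSet {V : Type} (G : SimpleGraph V) (M : Finset (Sym2 V)) : Prop :=
  (M : Set (Sym2 V)) ⊆ G.edgeSet ∧
    (M : Set (Sym2 V)).Pairwise fun e f => ∀ v, v ∈ e → v ∉ f

/-- An induced matching: a matching such that no two of its edges are joined by an edge
of `G`, i.e. it is the edge set of an induced subgraph. -/
def IsInducedMatchingSet {V : Type} (G : SimpleGraph V) (M : Finset (Sym2 V)) : Prop :=
  IsMatchingSet G M ∧
    (M : Set (Sym2 V)).Pairwise fun e f => ∀ u v, u ∈ e → v ∈ f → ¬G.Adj u v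

/-- The matching number `mat(G)`. -/
def matchingNumber {V : Type} (G : SimpleGraph V) : ℕ :=
  sSup { n | ∃ M, IsMatchingSet G M ∧ M.card = n }

/-- The induced matching number `ν(G)`. -/
def inducedMatchingNumber {V : Type} (G : SimpleGraph V) : ℕ :=
  sSup { n | ∃ M, IsInducedMatchingSet G M ∧ M.card = n }

/-- `G` has an induced cycle of length `n`. -/
def HasInducedCycle {V : Type} (G : SimpleGraph V) (n : ℕ) : Prop :=
  ∃ f : ZMod n → V, Function.Injective f ∧
    ∀ i j : ZMod n, G.Adj (f i) (f j) ↔ (j = i + 1 ∨ i = j + 1)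

/-- A graph is chordal if every induced cycle has length `3`. -/
def Chordal {V : Type} (G : SimpleGraph V) : Prop :=
  ∀ n, 4 ≤ n → ¬HasInducedCycle G n

/-- A graph is weakly chordal if every induced cycle in `G` and in `Gᶜ` has length at most 4. -/
def WeaklyChordal {V : Type} (G : SimpleGraph V) : Prop :=
  (∀ n, 5 ≤ n → ¬HasInducedCycle G n) ∧ ∀ n, 5 ≤ n → ¬HasInducedCycle Gᶜ n

/-- The co-chordal cover number `cochord(G)`: the least `n` such that `n` co-chordal
subgraphs of `G` cover all the edges of `G`. -/
def cochordNumber {V : Type} (G : SimpleGraph V) : ℕ :=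
  sInf { n | ∃ H : Fin n → SimpleGraph V,
    (∀ i, H i ≤ G ∧ Chordal (H i)ᶜ) ∧ ∀ e ∈ G.edgeSet, ∃ i, e ∈ (H i).edgeSet }

/-- A graph is unicyclic if it contains exactly one cycle. -/
def Unicyclic {V : Type} (G : SimpleGraph V) : Prop :=
  ∃ (v : V) (c : G.Walk v v), c.IsCycle ∧
    ∀ (w : V) (c' : G.Walk w w), c'.IsCycle → { e | e ∈ c'.edges } = { e | e ∈ c.edges }

/-- Data exhibiting `G` as the graph `H_T` obtained from the induced subgraph on `Hset`
by attaching, at each vertex of `T ⊆ Hset`, a union of complete graphs having that vertex as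
their only common vertex: a family of cliques `C i` of `G`, each meeting `Hset` exactly in
its attachment vertex `a i ∈ T`, two distinct cliques meeting in at most the common
attachment vertex, together covering all vertices outside `Hset`, and all edges of `G`
lying either inside `Hset` or inside one of the cliques. -/
structure CliqueAttachment {V : Type} (G : SimpleGraph V) (Hset T : Set V) where
  ι : Type
  C : ι → Finset V
  a : ι → V
  a_mem_T : ∀ i, a i ∈ T
  T_sub : T ⊆ Hset
  inter_H : ∀ i, (C i : Set V) ∩ Hset = {a i}
  a_mem_C : ∀ i, a i ∈ C i
  clique : ∀ i, G.IsClique (C i)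
  pairwise_inter : ∀ i j, i ≠ j → (C i : Set V) ∩ (C j : Set V) ⊆ ({a i} : Set V)
  cover : Hset ∪ (⋃ i, (C i : Set V)) = Set.univ
  edges_sub : ∀ u v, G.Adj u v → (u ∈ Hset ∧ v ∈ Hset) ∨ ∃ i, u ∈ C i ∧ v ∈ C i

end EdgeIdealReg

/-!
In every attached clique `C` with at least three vertices pick an edge avoiding `V(H)`; edges
chosen in different cliques are disjoint and not joined by an edge of `G`, so they form an
induced matching and `ν(G) ≥ m`, where `m` is the number of such cliques. Conversely, the edges
of `G` meeting such a clique `C` form a co-chordal subgraph (its complement is a split graph),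
and since `T` is a vertex cover and every vertex of `T` carries a clique with at least three
vertices, these `m` subgraphs cover all edges of `G`, so `cochord(G) ≤ m`. Finally
`ν ≤ cochord` for every graph, since two edges of an induced matching lying in one co-chordal
subgraph would span an induced `C₄` in its complement.
-/

namespace EdgeIdealReg

variable {V : Type}

theorem zmod_natCast_ne_zero {n k : ℕ} (hk : 0 < k) (hkn : k < n) : (k : ZMod n) ≠ 0 := by
  rw [Ne, ZMod.natCast_eq_zero_iff]
  exact Nat.not_dvd_of_pos_of_lt hk hkn

theorem chordal_of_split (G : SimpleGraph V) (S : Set V)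
    (hS : ∀ u ∈ S, ∀ v ∈ S, ¬G.Adj u v) (hSc : ∀ u ∉ S, ∀ v ∉ S, u ≠ v → G.Adj u v) :
    Chordal G := by
  rintro n hn ⟨f, hf, hadj⟩
  have h1 : (1 : ZMod n) ≠ 0 := by
    exact_mod_cast zmod_natCast_ne_zero (k := 1) one_pos (by omega)
  have h2 : (2 : ZMod n) ≠ 0 := by
    exact_mod_cast zmod_natCast_ne_zero (k := 2) two_pos (by omega)
  have h3 : (3 : ZMod n) ≠ 0 := by
    exact_mod_cast zmod_natCast_ne_zero (k := 3) three_pos (by omega)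
  have hout : ∀ p, f p ∉ S ∨ f (p + 1) ∉ S := fun p => by
    by_contra! h
    exact hS _ h.1 _ h.2 ((hadj p (p + 1)).2 (Or.inl rfl))
  have hcons : ∀ p q, f p ∉ S → f q ∉ S → p ≠ q → q = p + 1 ∨ p = q + 1 :=
    fun p q hp hq hpq => (hadj p q).1 (hSc _ hp _ hq (hf.ne hpq))
  obtain ⟨p, hp⟩ : ∃ p, f p ∉ S := (hout 0).elim (⟨0, ·⟩) (⟨1, by simpa using ·⟩)
  -- `f p` and `f (p + 2)` are not consecutive on the cycle, so they cannot both lie outside `S`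
  have hp2 : f (p + 2) ∈ S := by
    by_contra h
    rcases hcons p (p + 2) hp h (fun e => h2 (by linear_combination -e)) with e | e
    · exact h1 (by linear_combination e)
    · exact h3 (by linear_combination -e)
  have hp1 : f (p + 1) ∉ S :=
    (hout (p + 1)).resolve_right (by rwa [show p + 1 + 1 = p + 2 by ring, not_not])
  have hp3 : f (p + 3) ∉ S := by
    simpa [show p + 2 + 1 = p + 3 by ring] using (hout (p + 2)).resolve_left (not_not.2 hp2)
  rcases hcons (p + 1) (p + 3) hp1 hp3 (fun e => h2 (by linear_combination -e)) with e | e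
  · exact h1 (by linear_combination e)
  · exact h3 (by linear_combination -e)

theorem hasInducedCycle_compl_four {H : SimpleGraph V} {e f : Sym2 V}
    (he : e ∈ H.edgeSet) (hf : f ∈ H.edgeSet) (hdisj : ∀ v ∈ e, v ∉ f)
    (hnadj : ∀ u ∈ e, ∀ v ∈ f, ¬H.Adj u v) : HasInducedCycle Hᶜ 4 := by
  induction e using Sym2.ind with | _ x y => ?_
  induction f using Sym2.ind with | _ x' y' => ?_
  simp only [SimpleGraph.mem_edgeSet] at he hf
  simp only [Sym2.mem_iff, forall_eq_or_imp, forall_eq] at hdisj hnadj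
  have hxy := he.ne
  have hxy' := hf.ne
  have h4 : ∀ i : ZMod 4, i = 0 ∨ i = 1 ∨ i = 2 ∨ i = 3 := by decide
  let c : ZMod 4 → V := ![x, x', y, y']
  have c0 : c 0 = x := rfl
  have c1 : c 1 = x' := rfl
  have c2 : c 2 = y := rfl
  have c3 : c 3 = y' := rfl
  refine ⟨c, fun i j hij => ?_, fun i j => ?_⟩ <;>
    rcases h4 i with rfl | rfl | rfl | rfl <;> rcases h4 j with rfl | rfl | rfl | rfl <;>
    simp_all [SimpleGraph.compl_adj, eq_comm, SimpleGraph.adj_comm] <;> decide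

theorem IsInducedMatchingSet.card_le_inducedMatchingNumber [Finite V] {G : SimpleGraph V}
    {M : Finset (Sym2 V)} (hM : IsInducedMatchingSet G M) : M.card ≤ inducedMatchingNumber G :=
  le_csSup ⟨Nat.card (Sym2 V), by
    rintro _ ⟨N, -, rfl⟩
    simpa using Nat.card_le_card_of_injective ((↑) : N → Sym2 V) Subtype.val_injective⟩
    ⟨M, hM, rfl⟩

theorem injective_of_pairwise_not_mem {ι : Type} {e : ι → Sym2 V}
    (hdisj : ∀ i j, i ≠ j → ∀ v ∈ e i, v ∉ e j) : Function.Injective e := fun i j hij => by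
  by_contra hne
  exact hdisj i j hne _ (Sym2.out_fst_mem _) (hij ▸ Sym2.out_fst_mem _)

theorem exists_isInducedMatchingSet_card_eq {ι : Type} [Finite ι] (G : SimpleGraph V)
    (e : ι → Sym2 V) (he : ∀ i, e i ∈ G.edgeSet) (hdisj : ∀ i j, i ≠ j → ∀ v ∈ e i, v ∉ e j)
    (hind : ∀ i j, i ≠ j → ∀ u v, u ∈ e i → v ∈ e j → ¬G.Adj u v) :
    ∃ M, IsInducedMatchingSet G M ∧ M.card = Nat.card ι := by
  classical
  have : Fintype ι := Fintype.ofFinite ι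
  refine ⟨Finset.univ.image e, ⟨⟨?_, ?_⟩, ?_⟩, ?_⟩
  · simpa [Set.subset_def] using he
  · simp only [Finset.coe_image, Finset.coe_univ, Set.image_univ]
    rintro _ ⟨i, rfl⟩ _ ⟨j, rfl⟩ hij
    exact hdisj i j (ne_of_apply_ne e hij)
  · simp only [Finset.coe_image, Finset.coe_univ, Set.image_univ]
    rintro _ ⟨i, rfl⟩ _ ⟨j, rfl⟩ hij
    exact hind i j (ne_of_apply_ne e hij)
  · rw [Finset.card_image_of_injective _ (injective_of_pairwise_not_mem hdisj), Finset.card_univ,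
      Nat.card_eq_fintype_card]

/-- `cochordNumber G` is the least `n` such that some `H : Fin n → SimpleGraph V` is a
co-chordal cover of `G`. -/
def IsCochordalCover {ι : Type} (G : SimpleGraph V) (H : ι → SimpleGraph V) : Prop :=
  (∀ i, H i ≤ G ∧ Chordal (H i)ᶜ) ∧ ∀ e ∈ G.edgeSet, ∃ i, e ∈ (H i).edgeSet

namespace IsCochordalCover

variable {ι κ : Type} {G : SimpleGraph V} {H : ι → SimpleGraph V}

theorem comp_equiv (hH : IsCochordalCover G H) (σ : κ ≃ ι) : IsCochordalCover G (H ∘ σ) :=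
  ⟨fun k => hH.1 (σ k), fun e he => (hH.2 e he).imp' σ.symm (by simp)⟩

theorem cochordNumber_le [Finite ι] (hH : IsCochordalCover G H) :
    cochordNumber G ≤ Nat.card ι :=
  Nat.sInf_le ⟨_, hH.comp_equiv (Finite.equivFin ι).symm⟩

theorem card_le_of_isInducedMatchingSet [Finite ι] (hH : IsCochordalCover G H)
    {M : Finset (Sym2 V)} (hM : IsInducedMatchingSet G M) : M.card ≤ Nat.card ι := by
  choose φ hφ using fun e : M => hH.2 e (hM.1.1 e.2)
  -- two edges of an induced matching in one `H i` would span an induced `C₄` in `(H i)ᶜ`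
  have hφ_inj : Function.Injective φ := fun e f hef => by
    by_contra hne
    have hne' : (e : Sym2 V) ≠ f := fun h => hne (Subtype.ext h)
    exact (hH.1 (φ e)).2 4 le_rfl <| hasInducedCycle_compl_four (hφ e) (hef ▸ hφ f)
      (hM.1.2 e.2 f.2 hne') fun u hu v hv h => hM.2 e.2 f.2 hne' u v hu hv ((hH.1 _).1 h)
  simpa using Nat.card_le_card_of_injective φ hφ_inj

theorem inducedMatchingNumber_le_cochordNumber [Finite ι] (hH : IsCochordalCover G H) :
    inducedMatchingNumber G ≤ cochordNumber G := by
  obtain ⟨H', hH'⟩ : cochordNumber G ∈ { n | ∃ H' : Fin n → SimpleGraph V,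
      IsCochordalCover G H' } :=
    Nat.sInf_mem ⟨_, _, hH.comp_equiv (Finite.equivFin ι).symm⟩
  refine csSup_le ⟨0, ∅, ⟨⟨by simp, by simp⟩, by simp⟩, rfl⟩ ?_
  rintro _ ⟨M, hM, rfl⟩
  simpa using hH'.card_le_of_isInducedMatchingSet hM

end IsCochordalCover

def edgesMeeting (G : SimpleGraph V) (s : Set V) : SimpleGraph V where
  Adj u v := G.Adj u v ∧ (u ∈ s ∨ v ∈ s)
  symm := ⟨fun _ _ h => ⟨h.1.symm, h.2.symm⟩⟩
  loopless := ⟨fun _ h => h.1.ne rfl⟩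

@[simp]
theorem edgesMeeting_adj {G : SimpleGraph V} {s : Set V} {u v : V} :
    (edgesMeeting G s).Adj u v ↔ G.Adj u v ∧ (u ∈ s ∨ v ∈ s) :=
  Iff.rfl

theorem edgesMeeting_le (G : SimpleGraph V) (s : Set V) : edgesMeeting G s ≤ G :=
  fun _ _ h => (edgesMeeting_adj.1 h).1

theorem chordal_compl_edgesMeeting {G : SimpleGraph V} {s : Set V} (hs : G.IsClique s) :
    Chordal (edgesMeeting G s)ᶜ :=
  chordal_of_split _ s
    (fun _ hu _ hv h => ((SimpleGraph.compl_adj _ _ _).1 h).2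
      (edgesMeeting_adj.2 ⟨hs hu hv h.ne, Or.inl hu⟩))
    (fun _ hu _ hv huv => (SimpleGraph.compl_adj _ _ _).2
      ⟨huv, fun h => (edgesMeeting_adj.1 h).2.elim hu hv⟩)

namespace CliqueAttachment

variable {G : SimpleGraph V} {Hset T : Set V} (A : CliqueAttachment G Hset T)

theorem a_mem_Hset (i : A.ι) : A.a i ∈ Hset := A.T_sub (A.a_mem_T i)

theorem not_mem_Hset {i : A.ι} {z : V} (hz : z ∈ A.C i) (hza : z ≠ A.a i) : z ∉ Hset := by
  intro hzH
  have h : z ∈ (A.C i : Set V) ∩ Hset := ⟨hz, hzH⟩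
  rw [A.inter_H i] at h
  exact hza h

theorem eq_of_mem_of_not_mem_Hset {i j : A.ι} {z : V} (hi : z ∈ A.C i) (hj : z ∈ A.C j)
    (hz : z ∉ Hset) : i = j := by
  by_contra hij
  obtain rfl : z = A.a i := A.pairwise_inter i j hij ⟨hi, hj⟩
  exact hz (A.a_mem_Hset i)

theorem eq_of_adj {i j : A.ι} {z w : V} (hz : z ∈ A.C i) (hzH : z ∉ Hset) (hw : w ∈ A.C j)
    (hwH : w ∉ Hset) (hzw : G.Adj z w) : i = j := by
  rcases A.edges_sub z w hzw with ⟨hz', -⟩ | ⟨k, hzk, hwk⟩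
  · exact absurd hz' hzH
  · exact (A.eq_of_mem_of_not_mem_Hset hz hzk hzH).trans
      (A.eq_of_mem_of_not_mem_Hset hw hwk hwH).symm

theorem exists_edge_of_three_le_card {i : A.ι} (hi : 3 ≤ (A.C i).card) :
    ∃ e ∈ G.edgeSet, ∀ w ∈ e, w ∈ A.C i ∧ w ∉ Hset := by
  classical
  have hcard : 1 < ((A.C i).erase (A.a i)).card := by
    rw [Finset.card_erase_of_mem (A.a_mem_C i)]
    omega
  obtain ⟨u, hu, v, hv, huv⟩ := Finset.one_lt_card.1 hcard
  obtain ⟨hua, hu⟩ := Finset.mem_erase.1 hu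
  obtain ⟨hva, hv⟩ := Finset.mem_erase.1 hv
  refine ⟨s(u, v), A.clique i hu hv huv, ?_⟩
  intro w hw
  rcases Sym2.mem_iff.1 hw with rfl | rfl
  exacts [⟨hu, A.not_mem_Hset hu hua⟩, ⟨hv, A.not_mem_Hset hv hva⟩]

theorem exists_separated_edges : ∃ e : { i : A.ι // 3 ≤ (A.C i).card } → Sym2 V,
    (∀ i, e i ∈ G.edgeSet) ∧ (∀ i j, i ≠ j → ∀ v ∈ e i, v ∉ e j) ∧
      ∀ i j, i ≠ j → ∀ u v, u ∈ e i → v ∈ e j → ¬G.Adj u v := by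
  choose e he hmem using fun i : { i : A.ι // 3 ≤ (A.C i).card } =>
    A.exists_edge_of_three_le_card i.2
  refine ⟨e, he, fun i j hij v hvi hvj => hij ?_, fun i j hij u v hu hv huv => hij ?_⟩
  · exact Subtype.ext <| A.eq_of_mem_of_not_mem_Hset (hmem i v hvi).1 (hmem j v hvj).1
      (hmem i v hvi).2
  · exact Subtype.ext <| A.eq_of_adj (hmem i u hu).1 (hmem i u hu).2 (hmem j v hv).1
      (hmem j v hv).2 huv

theorem exists_three_le_card_of_adj
    (hcover : ∀ u v, u ∈ Hset → v ∈ Hset → G.Adj u v → u ∈ T ∨ v ∈ T)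
    (hstar : ∀ x ∈ T, ∃ i, A.a i = x ∧ 3 ≤ (A.C i).card) {u v : V} (huv : G.Adj u v) :
    ∃ i, 3 ≤ (A.C i).card ∧ (u ∈ A.C i ∨ v ∈ A.C i) := by
  classical
  have of_mem_T : ∀ x ∈ T, x = u ∨ x = v →
      ∃ i, 3 ≤ (A.C i).card ∧ (u ∈ A.C i ∨ v ∈ A.C i) := by
    rintro x hx hxuv
    obtain ⟨i, rfl, hi⟩ := hstar x hx
    rcases hxuv with rfl | rfl
    exacts [⟨i, hi, Or.inl (A.a_mem_C i)⟩, ⟨i, hi, Or.inr (A.a_mem_C i)⟩]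
  rcases A.edges_sub u v huv with ⟨hu, hv⟩ | ⟨j, hu, hv⟩
  · rcases hcover u v hu hv huv with hx | hx
    exacts [of_mem_T u hx (Or.inl rfl), of_mem_T v hx (Or.inr rfl)]
  by_cases hj : 3 ≤ (A.C j).card
  · exact ⟨j, hj, Or.inl hu⟩
  -- a clique with at most two vertices containing the edge `uv` is `{u, v}`, so `a j ∈ {u, v}`
  refine of_mem_T (A.a j) (A.a_mem_T j) ?_
  by_contra! ha
  have : ({A.a j, u, v} : Finset V).card = 3 :=
    Finset.card_eq_three.2 ⟨_, _, _, ha.1, ha.2, huv.ne, rfl⟩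
  have := Finset.card_le_card (s := {A.a j, u, v}) (t := A.C j) (by
    simp [Finset.insert_subset_iff, A.a_mem_C j, hu, hv])
  omega

theorem isCochordalCover_edgesMeeting
    (hcover : ∀ u v, u ∈ Hset → v ∈ Hset → G.Adj u v → u ∈ T ∨ v ∈ T)
    (hstar : ∀ x ∈ T, ∃ i, A.a i = x ∧ 3 ≤ (A.C i).card) :
    IsCochordalCover G fun i : { i : A.ι // 3 ≤ (A.C i).card } => edgesMeeting G (A.C i) := by
  refine ⟨fun i => ⟨edgesMeeting_le G _, chordal_compl_edgesMeeting (A.clique i)⟩, ?_⟩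
  rintro ⟨u, v⟩ huv
  obtain ⟨i, hi, hmem⟩ := A.exists_three_le_card_of_adj hcover hstar huv
  exact ⟨⟨i, hi⟩, edgesMeeting_adj.2 ⟨huv, hmem⟩⟩

end CliqueAttachment

end EdgeIdealReg

open EdgeIdealReg in
theorem nu_eq_cochord_star_complete_general {V : Type} [Fintype V]
    (G : SimpleGraph V) (Hset T : Set V)
    (hcover : ∀ u v, u ∈ Hset → v ∈ Hset → G.Adj u v → u ∈ T ∨ v ∈ T)
    (A : CliqueAttachment G Hset T)
    (hstar : ∀ x ∈ T, ∃ i, A.a i = x ∧ 3 ≤ (A.C i).card) :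
    inducedMatchingNumber G = cochordNumber G ∧
      cochordNumber G = Nat.card { i : A.ι // 3 ≤ (A.C i).card } := by
  obtain ⟨e, he, hdisj, hind⟩ := A.exists_separated_edges
  have : Finite { i : A.ι // 3 ≤ (A.C i).card } :=
    Finite.of_injective e (injective_of_pairwise_not_mem hdisj)
  obtain ⟨M, hM, hMcard⟩ := exists_isInducedMatchingSet_card_eq G e he hdisj hind
  have hcov := A.isCochordalCover_edgesMeeting hcover hstar
  have hle := hcov.inducedMatchingNumber_le_cochordNumber
  have hcochord := hcov.cochordNumber_le
  have hM_le := hM.card_le_inducedMatchingNumber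
  omega

open EdgeIdealReg in
/-- If `H` is bipartite, `T ⊆ V(H)` is a vertex cover of `H`, and `G = H_T` where every
attached union of complete graphs contains a clique on at least `3` vertices (is star
complete), then `ν(G) = cochord(G)` and both equal the number of attached cliques of size
at least `3`. -/
theorem nu_eq_cochord_star_complete {V : Type} [Fintype V] [DecidableEq V]
    (G : SimpleGraph V) (Hset T : Set V) (hbip : (G.induce Hset).Colorable 2)
    (hcover : ∀ u v, u ∈ Hset → v ∈ Hset → G.Adj u v → u ∈ T ∨ v ∈ T)
    (A : CliqueAttachment G Hset T)
    (hstar : ∀ x ∈ T, ∃ i, A.a i = x ∧ 3 ≤ (A.C i).card) :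
    inducedMatchingNumber G = cochordNumber G ∧
      cochordNumber G = Nat.card { i : A.ι // 3 ≤ (A.C i).card } :=
  nu_eq_cochord_star_complete_general G Hset T hcover A hstar
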